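/- arXiv:1207.1030 — 9 statements merged into one kernel-verified Lean document; each statement's English description precedes it below -/
import Mathlib

section
/- Let n ≥ 2, let ζ be a vector in Minkowski n-space, and let ḡ be the bilinear form ḡ(x,y) = m(x,y) + m(ζ,x)·m(ζ,y). Then ḡ is degenerate (i.e. there exists a nonzero x with ḡ(x,y) = 0 for all y) if and only if ζ is timelike and unitary, i.e. m(ζ,ζ) = −1. (Paper: Lemma 1, point 1, stated pointwise.) -/
/-!
If `ḡ(x, ·) = 0`, then `m(x + m(ζ,x) ζ, ·) = 0`, so by nondegeneracy of `m` the vector `x` is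
`-c ζ` with `c = m(ζ,x) ≠ 0`; evaluating `c = m(ζ,x)` gives `c = -c m(ζ,ζ)`, i.e. `m(ζ,ζ) = -1`.
Conversely, if `m(ζ,ζ) = -1` then `ḡ(ζ,y) = m(ζ,y) - m(ζ,y) = 0`.
-/

/-- The Minkowski bilinear form on `ℝ × ℝᵏ`:
`m((a,u),(b,v)) = -a·b + ⟨u,v⟩`. -/
noncomputable def mink {k : ℕ} (x y : ℝ × EuclideanSpace ℝ (Fin k)) : ℝ :=
  -(x.1 * y.1) + (inner ℝ x.2 y.2 : ℝ)

section Minkowski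

variable {k : ℕ}

lemma mink_add_smul_left (x z y : ℝ × EuclideanSpace ℝ (Fin k)) (c : ℝ) :
    mink (x + c • z) y = mink x y + c * mink z y := by
  simp only [mink, Prod.fst_add, Prod.snd_add, Prod.smul_fst, Prod.smul_snd,
    inner_add_left, real_inner_smul_left, smul_eq_mul]
  ring

lemma mink_smul_right (x y : ℝ × EuclideanSpace ℝ (Fin k)) (c : ℝ) :
    mink x (c • y) = c * mink x y := by
  simp only [mink, Prod.smul_fst, Prod.smul_snd, real_inner_smul_right, smul_eq_mul]
  ring

lemma mink_self_flip (x : ℝ × EuclideanSpace ℝ (Fin k)) :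
    mink x (-x.1, x.2) = x.1 ^ 2 + ‖x.2‖ ^ 2 := by
  simp only [mink, real_inner_self_eq_norm_sq]
  ring

lemma eq_zero_of_forall_mink_eq_zero {x : ℝ × EuclideanSpace ℝ (Fin k)} (h : ∀ y, mink x y = 0) :
    x = 0 := by
  have hsum := h (-x.1, x.2)
  rw [mink_self_flip] at hsum
  have h1 : x.1 = 0 := by nlinarith [sq_nonneg x.1, sq_nonneg ‖x.2‖]
  have h2 : ‖x.2‖ = 0 := by nlinarith [sq_nonneg x.1, sq_nonneg ‖x.2‖]
  exact Prod.ext h1 (norm_eq_zero.mp h2)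

lemma eq_neg_smul_of_rigged_eq_zero {ζ x : ℝ × EuclideanSpace ℝ (Fin k)}
    (h : ∀ y, mink x y + mink ζ x * mink ζ y = 0) : x = -mink ζ x • ζ := by
  have hrad : x + mink ζ x • ζ = 0 := eq_zero_of_forall_mink_eq_zero fun y => by
    rw [mink_add_smul_left]
    exact h y
  rw [neg_smul]
  exact eq_neg_of_add_eq_zero_left hrad

lemma mink_self_eq_neg_one_of_rigged_eq_zero {ζ x : ℝ × EuclideanSpace ℝ (Fin k)} (hx : x ≠ 0)
    (h : ∀ y, mink x y + mink ζ x * mink ζ y = 0) : mink ζ ζ = -1 := by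
  set c := mink ζ x
  have hxc : x = -c • ζ := eq_neg_smul_of_rigged_eq_zero h
  have hc0 : c ≠ 0 := by
    intro hc0
    exact hx (by rw [hxc, hc0, neg_zero, zero_smul])
  have hcc : c = -c * mink ζ ζ := by
    calc c = mink ζ (-c • ζ) := by rw [← hxc]
      _ = -c * mink ζ ζ := mink_smul_right _ _ _
  have : c * (1 + mink ζ ζ) = 0 := by linear_combination hcc
  linear_combination (mul_eq_zero.mp this).resolve_left hc0

lemma ne_zero_of_mink_self_ne_zero {x : ℝ × EuclideanSpace ℝ (Fin k)} (h : mink x x ≠ 0) :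
    x ≠ 0 := by
  rintro rfl
  simp [mink] at h

end Minkowski

theorem riggedForm_degenerate_iff_unit_timelike_general
    (n : ℕ)
    (ζ : ℝ × EuclideanSpace ℝ (Fin (n - 1)))
    (gbar : (ℝ × EuclideanSpace ℝ (Fin (n - 1))) →
            (ℝ × EuclideanSpace ℝ (Fin (n - 1))) → ℝ)
    (hgbar : ∀ x y, gbar x y = mink x y + mink ζ x * mink ζ y) :
    (∃ x, x ≠ 0 ∧ ∀ y, gbar x y = 0) ↔ mink ζ ζ = -1 := by
  simp only [hgbar]
  constructor
  · rintro ⟨x, hx, h⟩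
    exact mink_self_eq_neg_one_of_rigged_eq_zero hx h
  · intro hζ
    refine ⟨ζ, ne_zero_of_mink_self_ne_zero (by rw [hζ]; norm_num), fun y => ?_⟩
    rw [hζ]
    ring

/-- Lemma 1, point 1 of the paper (pointwise): the form
`ḡ(x,y) = m(x,y) + m(ζ,x)·m(ζ,y)` on Minkowski `n`-space is degenerate
if and only if `ζ` is timelike and unitary, i.e. `m(ζ,ζ) = -1`. -/
theorem riggedForm_degenerate_iff_unit_timelike
    (n : ℕ) (hn : 2 ≤ n)
    (ζ : ℝ × EuclideanSpace ℝ (Fin (n - 1)))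
    (gbar : (ℝ × EuclideanSpace ℝ (Fin (n - 1))) →
            (ℝ × EuclideanSpace ℝ (Fin (n - 1))) → ℝ)
    (hgbar : ∀ x y, gbar x y = mink x y + mink ζ x * mink ζ y) :
    (∃ x, x ≠ 0 ∧ ∀ y, gbar x y = 0) ↔ mink ζ ζ = -1 :=
  riggedForm_degenerate_iff_unit_timelike_general n ζ gbar hgbar
end

section
/- Let n ≥ 2 and let ζ be a vector in Minkowski n-space with m(ζ,ζ) < −1 (a timelike vector of norm greater than 1). Then the bilinear form ḡ(x,y) = m(x,y) + m(ζ,x)·m(ζ,y) is positive definite. (Paper: remark following Lemma 1, Riemannian case.) -/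
open scoped RealInnerProductSpace

section RiggedForm

variable {k : ℕ}

theorem mink_self (x : ℝ × EuclideanSpace ℝ (Fin k)) : mink x x = -x.1 ^ 2 + ‖x.2‖ ^ 2 := by
  rw [mink, real_inner_self_eq_norm_sq]
  ring

theorem norm_sq_lt_of_mink_self_lt_neg_one {ζ : ℝ × EuclideanSpace ℝ (Fin k)}
    (hζ : mink ζ ζ < -1) : ‖ζ.2‖ ^ 2 < ζ.1 ^ 2 - 1 := by
  rw [mink_self] at hζ
  linarith

theorem mul_riggedForm_self_eq (ζ x : ℝ × EuclideanSpace ℝ (Fin k)) :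
    (ζ.1 ^ 2 - 1) * (mink x x + mink ζ x * mink ζ x) =
      ((ζ.1 ^ 2 - 1) * x.1 - ζ.1 * ⟪ζ.2, x.2⟫) ^ 2 +
        ((ζ.1 ^ 2 - 1) * ‖x.2‖ ^ 2 - ⟪ζ.2, x.2⟫ ^ 2) := by
  rw [mink_self, mink]
  ring

theorem riggedForm_self_pos {ζ x : ℝ × EuclideanSpace ℝ (Fin k)} (hζ : mink ζ ζ < -1)
    (hx : x ≠ 0) : 0 < mink x x + mink ζ x * mink ζ x := by
  have hζ₂ := norm_sq_lt_of_mink_self_lt_neg_one hζ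
  have hc : 0 < ζ.1 ^ 2 - 1 := (sq_nonneg _).trans_lt hζ₂
  refine pos_of_mul_pos_right ?_ hc.le
  rw [mul_riggedForm_self_eq]
  rcases eq_or_ne x.2 0 with hx₂ | hx₂
  · have hx₁ : x.1 ≠ 0 := fun hx₁ => hx (Prod.ext hx₁ hx₂)
    simp only [hx₂, inner_zero_right, norm_zero, mul_zero, sub_zero, ne_eq, OfNat.ofNat_ne_zero,
      not_false_eq_true, zero_pow, sub_self, add_zero]
    positivity
  · have cauchySchwarz : ⟪ζ.2, x.2⟫ ^ 2 ≤ ‖ζ.2‖ ^ 2 * ‖x.2‖ ^ 2 := by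
      rw [← mul_pow, ← sq_abs]
      exact pow_le_pow_left₀ (abs_nonneg _) (abs_real_inner_le_norm _ _) 2
    have hgap := mul_lt_mul_of_pos_right hζ₂ (pow_pos (norm_pos_iff.mpr hx₂) 2)
    exact add_pos_of_nonneg_of_pos (sq_nonneg _) (by linarith)

end RiggedForm

theorem riggedForm_posDef_of_norm_gt_one_general
    (n : ℕ)
    (ζ : ℝ × EuclideanSpace ℝ (Fin (n - 1)))
    (hζ : mink ζ ζ < -1)
    (gbar : (ℝ × EuclideanSpace ℝ (Fin (n - 1))) →
            (ℝ × EuclideanSpace ℝ (Fin (n - 1))) → ℝ)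
    (hgbar : ∀ x y, gbar x y = mink x y + mink ζ x * mink ζ y) :
    ∀ x, x ≠ 0 → 0 < gbar x x := by
  intro x hx
  rw [hgbar]
  exact riggedForm_self_pos hζ hx

/-- Remark after Lemma 1 of the paper (Riemannian case, pointwise): if `ζ` is a
timelike vector of Minkowski `n`-space with `m(ζ,ζ) < -1`, then the form
`ḡ(x,y) = m(x,y) + m(ζ,x)·m(ζ,y)` is positive definite. -/
theorem riggedForm_posDef_of_norm_gt_one
    (n : ℕ) (hn : 2 ≤ n)
    (ζ : ℝ × EuclideanSpace ℝ (Fin (n - 1)))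
    (hζ : mink ζ ζ < -1)
    (gbar : (ℝ × EuclideanSpace ℝ (Fin (n - 1))) →
            (ℝ × EuclideanSpace ℝ (Fin (n - 1))) → ℝ)
    (hgbar : ∀ x y, gbar x y = mink x y + mink ζ x * mink ζ y) :
    ∀ x, x ≠ 0 → 0 < gbar x x :=
  riggedForm_posDef_of_norm_gt_one_general n ζ hζ gbar hgbar
end

section
/- Let n ≥ 2, let H be a degenerate hyperplane in Minkowski n-space, and let ζ be any vector. Then the bilinear form g̃ on H defined by g̃(v,w) = m(v,w) + m(ζ,v)·m(ζ,w) is positive definite if and only if ζ ∉ H. (Paper: Lemma 1, point 2, stated pointwise: the metric induced on a lightlike hypersurface by a rigging is Riemannian.) -/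
section

variable {k : ℕ}

lemma mink_comm (x y : ℝ × EuclideanSpace ℝ (Fin k)) : mink x y = mink y x := by
  simp only [mink, mul_comm x.1, real_inner_comm x.2]

noncomputable def minkBilin (k : ℕ) : LinearMap.BilinForm ℝ (ℝ × EuclideanSpace ℝ (Fin k)) :=
  LinearMap.mk₂ ℝ mink
    (fun x y z => by simp only [mink, Prod.fst_add, Prod.snd_add, inner_add_left]; ring)
    (fun c x y => by simp [mink, inner_smul_left]; ring)
    (fun x y z => by simp only [mink, Prod.fst_add, Prod.snd_add, inner_add_right]; ring)
    (fun c x y => by simp [mink, inner_smul_right]; ring)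

@[simp] lemma minkBilin_apply (x y : ℝ × EuclideanSpace ℝ (Fin k)) :
    minkBilin k x y = mink x y := rfl

lemma fst_ne_zero_of_mink_self_eq_zero {ξ : ℝ × EuclideanSpace ℝ (Fin k)}
    (hξ : mink ξ ξ = 0) (hξ0 : ξ ≠ 0) : ξ.1 ≠ 0 := by
  intro h1
  have h2 : ξ.2 = 0 := by
    rw [← inner_self_eq_zero (𝕜 := ℝ)]
    simpa [mink, h1] using hξ
  exact hξ0 (Prod.ext h1 h2)

lemma mink_self_eq_norm_sq_of_mink_eq_zero {ξ v : ℝ × EuclideanSpace ℝ (Fin k)}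
    (hξ : mink ξ ξ = 0) (hξ1 : ξ.1 ≠ 0) (hv : mink ξ v = 0) :
    mink v v = ‖(v - (v.1 / ξ.1) • ξ).2‖ ^ 2 := by
  set w := v - (v.1 / ξ.1) • ξ
  have hw1 : w.1 = 0 := by simp [w, hξ1]
  have hww : mink w w = mink v v := by
    simp only [w, ← minkBilin_apply, map_sub, map_smul, LinearMap.sub_apply, LinearMap.smul_apply]
    simp [mink_comm v ξ, hv, hξ]
  rw [← hww, mink, hw1, real_inner_self_eq_norm_sq]
  ring

lemma mink_self_nonneg_of_mink_eq_zero {ξ v : ℝ × EuclideanSpace ℝ (Fin k)}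
    (hξ : mink ξ ξ = 0) (hξ1 : ξ.1 ≠ 0) (hv : mink ξ v = 0) : 0 ≤ mink v v := by
  rw [mink_self_eq_norm_sq_of_mink_eq_zero hξ hξ1 hv]
  positivity

lemma eq_smul_of_mink_eq_zero_of_mink_self_eq_zero {ξ v : ℝ × EuclideanSpace ℝ (Fin k)}
    (hξ : mink ξ ξ = 0) (hξ1 : ξ.1 ≠ 0) (hv : mink ξ v = 0) (hvv : mink v v = 0) :
    v = (v.1 / ξ.1) • ξ := by
  rw [mink_self_eq_norm_sq_of_mink_eq_zero hξ hξ1 hv, sq_eq_zero_iff, norm_eq_zero] at hvv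
  rw [← sub_eq_zero]
  exact Prod.ext (by simp [hξ1]) hvv

lemma eq_ker_minkBilin_of_finrank_eq {H : Submodule ℝ (ℝ × EuclideanSpace ℝ (Fin k))}
    (hH : Module.finrank ℝ H = k) {ξ : ℝ × EuclideanSpace ℝ (Fin k)} (hξ1 : ξ.1 ≠ 0)
    (hξH : ∀ w ∈ H, mink ξ w = 0) : H = LinearMap.ker (minkBilin k ξ) := by
  have hne : minkBilin k ξ ≠ 0 := fun h => hξ1 <| by
    simpa [mink] using LinearMap.congr_fun h (1, 0)
  refine Submodule.eq_of_le_of_finrank_eq (fun w hw => hξH w hw) ?_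
  have := Module.Dual.finrank_ker_add_one_of_ne_zero hne
  simp only [Module.finrank_prod, finrank_euclideanSpace_fin, Module.finrank_self] at this
  omega

lemma mink_self_add_mul_self_pos {ξ ζ v : ℝ × EuclideanSpace ℝ (Fin k)}
    (hξ : mink ξ ξ = 0) (hξ1 : ξ.1 ≠ 0) (hζ : mink ξ ζ ≠ 0) (hv : mink ξ v = 0) (hv0 : v ≠ 0) :
    0 < mink v v + mink ζ v * mink ζ v := by
  have hvv := mink_self_nonneg_of_mink_eq_zero hξ hξ1 hv
  refine lt_of_le_of_ne (add_nonneg hvv (mul_self_nonneg _)) fun h => ?_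
  obtain ⟨hvv0, hζv⟩ := (add_eq_zero_iff_of_nonneg hvv (mul_self_nonneg _)).mp h.symm
  rw [mul_self_eq_zero] at hζv
  have hvξ := eq_smul_of_mink_eq_zero_of_mink_self_eq_zero hξ hξ1 hv hvv0
  have ht : v.1 / ξ.1 ≠ 0 := fun ht => hv0 (by rw [hvξ, ht, zero_smul])
  rw [hvξ, ← minkBilin_apply, map_smul, minkBilin_apply, mink_comm, smul_eq_mul] at hζv
  exact hζ ((mul_eq_zero.mp hζv).resolve_left ht)

end

theorem riggedForm_posDef_on_degenerate_hyperplane_iff_general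
    (n : ℕ)
    (H : Submodule ℝ (ℝ × EuclideanSpace ℝ (Fin (n - 1))))
    (hHrank : Module.finrank ℝ H = n - 1)
    (hHdeg : ∃ ξ ∈ H, ξ ≠ 0 ∧ ∀ w ∈ H, mink ξ w = 0)
    (ζ : ℝ × EuclideanSpace ℝ (Fin (n - 1)))
    (gt : (ℝ × EuclideanSpace ℝ (Fin (n - 1))) →
          (ℝ × EuclideanSpace ℝ (Fin (n - 1))) → ℝ)
    (hgt : ∀ v w, gt v w = mink v w + mink ζ v * mink ζ w) :
    (∀ v ∈ H, v ≠ 0 → 0 < gt v v) ↔ ζ ∉ H := by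
  obtain ⟨ξ, hξH, hξ0, hξperp⟩ := hHdeg
  have hξ : mink ξ ξ = 0 := hξperp ξ hξH
  have hξ1 := fst_ne_zero_of_mink_self_eq_zero hξ hξ0
  have hH := eq_ker_minkBilin_of_finrank_eq hHrank hξ1 hξperp
  constructor
  · intro hpos hζ
    have := hpos ξ hξH hξ0
    rw [hgt, hξ, mink_comm, hξperp ζ hζ] at this
    simp at this
  · intro hζ v hv hv0
    rw [hgt]
    exact mink_self_add_mul_self_pos hξ hξ1 (fun h => hζ (hH ▸ h)) (hξperp v hv) hv0

/-- Lemma 1, point 2 of the paper (pointwise): given a degenerate hyperplane `H`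
of Minkowski `n`-space and a vector `ζ`, the form
`g̃(v,w) = m(v,w) + m(ζ,v)·m(ζ,w)` on `H` is positive definite iff `ζ ∉ H`. -/
theorem riggedForm_posDef_on_degenerate_hyperplane_iff
    (n : ℕ) (hn : 2 ≤ n)
    (H : Submodule ℝ (ℝ × EuclideanSpace ℝ (Fin (n - 1))))
    (hHrank : Module.finrank ℝ H = n - 1)
    (hHdeg : ∃ ξ ∈ H, ξ ≠ 0 ∧ ∀ w ∈ H, mink ξ w = 0)
    (ζ : ℝ × EuclideanSpace ℝ (Fin (n - 1)))
    (gt : (ℝ × EuclideanSpace ℝ (Fin (n - 1))) →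
          (ℝ × EuclideanSpace ℝ (Fin (n - 1))) → ℝ)
    (hgt : ∀ v w, gt v w = mink v w + mink ζ v * mink ζ w) :
    (∀ v ∈ H, v ≠ 0 → 0 < gt v v) ↔ ζ ∉ H :=
  riggedForm_posDef_on_degenerate_hyperplane_iff_general n H hHrank hHdeg ζ gt hgt
end

section
/- Let E be a nontrivial real Hilbert space, Ω ⊆ E open, h : Ω → ℝ differentiable at x ∈ Ω, and f : ℝ → ℝ with f(h(x)) > 0. Define the symmetric bilinear form B_x on E by B_x(v,w) = f(h(x))²·⟨v,w⟩ − (dh_x v)·(dh_x w), where dh_x is the Fréchet derivative of h at x. Then B_x is degenerate (there exists v ≠ 0 with B_x(v,w) = 0 for all w) if and only if ‖∇h(x)‖ = f(h(x)); and in that case the radical of B_x is spanned by the gradient ∇h(x). (Paper: Lemma 'lemahyperluzGRW' — the graph of h is a lightlike hypersurface of the GRW space I ×_f F iff |∇^F h|_F = f∘h — stated pointwise for a Euclidean/Hilbert fibre; B_x is the first fundamental form of the graph of h in the warped metric −dt² + f(t)²⟨·,·⟩, identifying the tangent space of the graph at (h(x),x) with E via v ↦ (dh_x v, v).) -/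
/-!
Writing `dh_x v = ⟪∇h(x), v⟫`, one has `B_x(v, w) = ⟪f(h x)² v - ⟪∇h(x), v⟫ ∇h(x), w⟫`, so `v` lies
in the radical iff `f(h x)² v = ⟪∇h(x), v⟫ ∇h(x)`. A nonzero solution must be a multiple of
`∇h(x)` with `⟪∇h(x), v⟫ ≠ 0`, and pairing with `∇h(x)` forces `‖∇h(x)‖² = f(h x)²`.
-/

open RealInnerProductSpace

section RankOnePerturbation

variable {E : Type*} [NormedAddCommGroup E] [InnerProductSpace ℝ E] {a : ℝ} {g : E}

theorem forall_inner_sub_inner_mul_inner_eq_zero_iff (v : E) :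
    (∀ w, a * ⟪v, w⟫ - ⟪g, v⟫ * ⟪g, w⟫ = 0) ↔ a • v = ⟪g, v⟫ • g := by
  have hform : ∀ w, a * ⟪v, w⟫ - ⟪g, v⟫ * ⟪g, w⟫ = ⟪a • v - ⟪g, v⟫ • g, w⟫ := fun w => by
    rw [inner_sub_left, real_inner_smul_left, real_inner_smul_left]
  simp only [hform, ← sub_eq_zero (a := a • v)]
  exact ⟨fun h => inner_self_eq_zero.mp (h _), fun h w => by rw [h, inner_zero_left]⟩

theorem exists_ne_zero_smul_eq_inner_smul_iff (ha : a ≠ 0) :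
    (∃ v, v ≠ 0 ∧ a • v = ⟪g, v⟫ • g) ↔ ‖g‖ ^ 2 = a := by
  constructor
  · rintro ⟨v, hv0, hv⟩
    have hgv : ⟪g, v⟫ ≠ 0 := by
      intro hz
      rw [hz, zero_smul, smul_eq_zero] at hv
      exact hv.elim ha hv0
    have hpair : ⟪g, v⟫ * a = ⟪g, v⟫ * ‖g‖ ^ 2 := by
      simpa only [real_inner_smul_right, real_inner_self_eq_norm_sq, mul_comm a]
        using congrArg (⟪g, ·⟫) hv
    exact (mul_left_cancel₀ hgv hpair).symm
  · intro hg
    have hg0 : g ≠ 0 := by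
      rintro rfl
      exact ha (by simpa using hg.symm)
    exact ⟨g, hg0, by rw [real_inner_self_eq_norm_sq, hg]⟩

theorem smul_eq_inner_smul_iff_exists_eq_smul (ha : a ≠ 0) (hg : ‖g‖ ^ 2 = a) (v : E) :
    a • v = ⟪g, v⟫ • g ↔ ∃ c : ℝ, v = c • g := by
  constructor
  · intro hv
    refine ⟨⟪g, v⟫ / a, smul_right_injective E ha ?_⟩
    simp only [smul_smul, mul_div_cancel₀ _ ha, hv]
  · rintro ⟨c, rfl⟩
    rw [real_inner_smul_right, real_inner_self_eq_norm_sq, hg, smul_smul, mul_comm]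

end RankOnePerturbation

theorem graph_lightlike_iff_eikonal_general
    {E : Type*} [NormedAddCommGroup E] [InnerProductSpace ℝ E]
    [CompleteSpace E]
    {x : E}
    {h : E → ℝ}
    (f : ℝ → ℝ) (hf : 0 < f (h x))
    (B : E → E → ℝ)
    (hB : ∀ v w, B v w =
      (f (h x)) ^ 2 * (inner ℝ v w : ℝ) - (fderiv ℝ h x v) * (fderiv ℝ h x w)) :
    ((∃ v, v ≠ 0 ∧ ∀ w, B v w = 0) ↔ ‖gradient h x‖ = f (h x)) ∧
    (‖gradient h x‖ = f (h x) →
      ∀ v, (∀ w, B v w = 0) ↔ ∃ c : ℝ, v = c • gradient h x) := by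
  have hsq : f (h x) ^ 2 ≠ 0 := pow_ne_zero 2 hf.ne'
  have hrad : ∀ v, (∀ w, B v w = 0) ↔ f (h x) ^ 2 • v = ⟪gradient h x, v⟫ • gradient h x := by
    intro v
    simp only [hB, ← inner_gradient_left]
    exact forall_inner_sub_inner_mul_inner_eq_zero_iff v
  have heikonal : ‖gradient h x‖ = f (h x) ↔ ‖gradient h x‖ ^ 2 = f (h x) ^ 2 :=
    (sq_eq_sq₀ (norm_nonneg _) hf.le).symm
  simp only [hrad, heikonal]
  exact ⟨exists_ne_zero_smul_eq_inner_smul_iff hsq,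
    fun hg => smul_eq_inner_smul_iff_exists_eq_smul hsq hg⟩

/-- Lemma `lemahyperluzGRW` of the paper, stated pointwise for a Hilbert fibre:
the first fundamental form `B_x(v,w) = f(h(x))²⟨v,w⟩ − dh_x(v)·dh_x(w)` of the
graph of `h` in the warped metric `−dt² + f(t)²⟨·,·⟩` is degenerate at `x`
iff `‖∇h(x)‖ = f(h(x))`, and in that case its radical is spanned by `∇h(x)`. -/
theorem graph_lightlike_iff_eikonal
    {E : Type*} [NormedAddCommGroup E] [InnerProductSpace ℝ E]
    [CompleteSpace E] [Nontrivial E]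
    {Ω : Set E} (hΩ : IsOpen Ω) {x : E} (hx : x ∈ Ω)
    {h : E → ℝ} (hdiff : DifferentiableAt ℝ h x)
    (f : ℝ → ℝ) (hf : 0 < f (h x))
    (B : E → E → ℝ)
    (hB : ∀ v w, B v w =
      (f (h x)) ^ 2 * (inner ℝ v w : ℝ) - (fderiv ℝ h x v) * (fderiv ℝ h x w)) :
    ((∃ v, v ≠ 0 ∧ ∀ w, B v w = 0) ↔ ‖gradient h x‖ = f (h x)) ∧
    (‖gradient h x‖ = f (h x) →
      ∀ v, (∀ w, B v w = 0) ↔ ∃ c : ℝ, v = c • gradient h x) :=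
  graph_lightlike_iff_eikonal_general f hf B hB
end

section
/- Let E be a real Hilbert space, Ω ⊆ E open, h : Ω → ℝ twice continuously differentiable, and f : ℝ → ℝ differentiable. Assume the eikonal-type identity ‖∇h(x)‖² = f(h(x))² for all x ∈ Ω. Then for every x ∈ Ω the derivative of the gradient field in its own direction satisfies D(∇h)(x)(∇h(x)) = f(h(x))·f′(h(x))·∇h(x), where D(∇h)(x) denotes the Fréchet derivative at x of the map y ↦ ∇h(y). (Paper: Formula (remarkh): ∇^F_{∇^F h} ∇^F h = (f∘h)(f′∘h)∇^F h for any function whose graph is a lightlike hypersurface of I ×_f F, stated for a Euclidean/Hilbert fibre.) -/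
/-!
Write `G = ∇h` and `B = DG(x)`. Differentiating `‖G‖² = φ ∘ h` (here `φ = f²`) in a direction `w`
gives `2 ⟪B w, G x⟫ = φ'(h x) ⟪G x, w⟫`. Since `⟪B v, w⟫ = D²h(x) v w` is symmetric in `v, w`
(Schwarz), the left side equals `2 ⟪B (G x), w⟫`, so `B (G x) = (φ'(h x) / 2) G x`.
-/

open InnerProductSpace Filter Topology

theorem ContDiffAt.differentiableAt_fderiv {E F : Type*} [NormedAddCommGroup E] [NormedSpace ℝ E]
    [NormedAddCommGroup F] [NormedSpace ℝ F] {g : E → F} {x : E} (hg : ContDiffAt ℝ 2 g x) :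
    DifferentiableAt ℝ (fderiv ℝ g) x :=
  (hg.fderiv_right (m := 1) (by norm_num)).differentiableAt (by norm_num)

section

variable {E : Type*} [NormedAddCommGroup E] [InnerProductSpace ℝ E] [CompleteSpace E]
  {h : E → ℝ} {x : E}

theorem hasFDerivAt_gradient (hd : DifferentiableAt ℝ (fderiv ℝ h) x) :
    HasFDerivAt (gradient h)
      ((toDual ℝ E).symm.toContinuousLinearEquiv.toContinuousLinearMap ∘L
        fderiv ℝ (fderiv ℝ h) x) x :=
  (toDual ℝ E).symm.toContinuousLinearEquiv.toContinuousLinearMap.hasFDerivAt.comp x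
    hd.hasFDerivAt

theorem inner_fderiv_gradient_apply (hd : DifferentiableAt ℝ (fderiv ℝ h) x) (v w : E) :
    ⟪fderiv ℝ (gradient h) x v, w⟫_ℝ = fderiv ℝ (fderiv ℝ h) x v w := by
  simp [(hasFDerivAt_gradient hd).fderiv, toDual_symm_apply]

theorem inner_fderiv_gradient_comm (hh : ContDiffAt ℝ 2 h x) (v w : E) :
    ⟪fderiv ℝ (gradient h) x v, w⟫_ℝ = ⟪fderiv ℝ (gradient h) x w, v⟫_ℝ := by
  rw [inner_fderiv_gradient_apply hh.differentiableAt_fderiv,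
    inner_fderiv_gradient_apply hh.differentiableAt_fderiv]
  exact hh.isSymmSndFDerivAt (by simp) v w

theorem fderiv_gradient_apply_gradient_of_norm_sq_eventuallyEq
    (hh : ContDiffAt ℝ 2 h x) {φ : ℝ → ℝ} (hφ : DifferentiableAt ℝ φ (h x))
    (heq : (fun y => ‖gradient h y‖ ^ 2) =ᶠ[𝓝 x] φ ∘ h) :
    fderiv ℝ (gradient h) x (gradient h x) = (deriv φ (h x) / 2) • gradient h x := by
  set B := fderiv ℝ (gradient h) x
  have hG : HasFDerivAt (gradient h) B x :=
    (hasFDerivAt_gradient hh.differentiableAt_fderiv).differentiableAt.hasFDerivAt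
  have hdh : HasFDerivAt h (fderiv ℝ h x) x :=
    (hh.differentiableAt (by norm_num)).hasFDerivAt
  have hderiv : 2 • (innerSL ℝ (gradient h x)).comp B = deriv φ (h x) • fderiv ℝ h x := by
    rw [← hG.norm_sq.fderiv, ← (hφ.hasDerivAt.comp_hasFDerivAt x hdh).fderiv]
    exact heq.fderiv_eq
  refine ext_inner_right ℝ fun w => ?_
  have hw := DFunLike.congr_fun hderiv w
  simp only [smul_apply, ContinuousLinearMap.comp_apply, innerSL_apply_apply,
    nsmul_eq_mul, Nat.cast_ofNat, smul_eq_mul, ← inner_gradient_left] at hw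
  rw [inner_fderiv_gradient_comm hh, real_inner_smul_left, real_inner_comm]
  linarith

end

/-- Formula `(remarkh)` of the paper, for a Hilbert fibre: if `‖∇h‖² = (f∘h)²`
on an open set `Ω` (so that the graph of `h` is a lightlike hypersurface of the
GRW space `I ×_f E`), then `∇_{∇h} ∇h = (f∘h)(f′∘h) ∇h` on `Ω`. -/
theorem grad_selfDeriv_of_eikonal
    {E : Type*} [NormedAddCommGroup E] [InnerProductSpace ℝ E] [CompleteSpace E]
    {Ω : Set E} (hΩ : IsOpen Ω)
    {h : E → ℝ} (hh : ContDiffOn ℝ 2 h Ω)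
    {f : ℝ → ℝ} (hf : Differentiable ℝ f)
    (heik : ∀ x ∈ Ω, ‖gradient h x‖ ^ 2 = (f (h x)) ^ 2) :
    ∀ x ∈ Ω, fderiv ℝ (gradient h) x (gradient h x)
      = (f (h x) * deriv f (h x)) • gradient h x := by
  intro x hx
  have hφ : HasDerivAt (fun t => f t ^ 2) (2 * f (h x) * deriv f (h x)) (h x) := by
    simpa using (hf (h x)).hasDerivAt.fun_pow 2
  have heq : (fun y => ‖gradient h y‖ ^ 2) =ᶠ[𝓝 x] (fun t => f t ^ 2) ∘ h :=
    eventually_of_mem (hΩ.mem_nhds hx) heik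
  rw [fderiv_gradient_apply_gradient_of_norm_sq_eventuallyEq (hh.contDiffAt (hΩ.mem_nhds hx))
    hφ.differentiableAt heq, hφ.deriv]
  congr 1; ring
end

section
/- Let E be a real Hilbert space of dimension ≥ 2, x₀ ∈ E, I ⊆ ℝ an interval, f : I → ℝ continuously differentiable and positive, t* ∈ I, and Ω ⊆ E ∖ {x₀} open. Suppose h : Ω → ℝ is differentiable and satisfies ∫_{t*}^{h(x)} (1/f(r)) dr = ‖x − x₀‖ for every x ∈ Ω. Then for every x ∈ Ω: (i) ∇h(x) = (f(h(x))/‖x − x₀‖)·(x − x₀), so in particular ‖∇h(x)‖ = f(h(x)); and (ii) for every v ∈ E with ⟨v, x − x₀⟩ = 0, D(∇h)(x)(v) = (f(h(x))/‖x − x₀‖)·v, where D(∇h)(x) is the Fréchet derivative at x of y ↦ ∇h(y). (Paper: the graph description of the local lightcone in a GRW space with flat fibre — Proposition 'conoGRW' — together with the flat case of Proposition 'conosumbilicos': the shape operator of the screen is proportional to the identity, so lightcones of Robertson–Walker spaces are totally umbilic.) -/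
/-!
Let `τ(t) = ∫_{t*}^t dr / f r` be the conformal time, so that the hypothesis reads
`τ ∘ h = ‖· - x₀‖` on `Ω`. As `τ` is strictly increasing on `I` and `‖· - x₀‖` has no local
extremum away from `x₀`, `h` takes its values in the interior of `I`, where `τ' = 1 / f`;
differentiating `τ ∘ h = ‖· - x₀‖` then gives `∇h(x) = f(h x) / ‖x - x₀‖ • (x - x₀)`.
Since `‖x - x₀‖ = τ(h x)`, this is the radial field `k(h x) • (x - x₀)` with `k = f / τ`; in a
direction `v ⟂ x - x₀` the term coming from differentiating `k ∘ h` vanishes because `∇h` is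
radial, which leaves `k(h x) • v`.
-/

open Set Filter Topology InnerProductSpace

section Integral

variable {g : ℝ → ℝ} {I : Set ℝ} {a : ℝ}

theorem strictMonoOn_integral_of_pos (hI : I.OrdConnected) (hg : ContinuousOn g I)
    (hpos : ∀ t ∈ I, 0 < g t) (ha : a ∈ I) :
    StrictMonoOn (fun t => ∫ r in a..t, g r) I := by
  have hint : ∀ b ∈ I, ∀ c ∈ I, IntervalIntegrable g MeasureTheory.volume b c :=
    fun b hb c hc => (hg.mono (hI.uIcc_subset hb hc)).intervalIntegrable
  intro b hb c hc hbc
  have hpos_bc : 0 < ∫ r in b..c, g r :=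
    intervalIntegral.intervalIntegral_pos_of_pos_on (hint b hb c hc)
      (fun t ht => hpos t (hI.out hb hc (Ioo_subset_Icc_self ht))) hbc
  have hsplit := intervalIntegral.integral_interval_sub_left (hint a ha c hc) (hint a ha b hb)
  linarith

theorem hasDerivAt_integral_of_continuousOn (hI : I.OrdConnected) (hg : ContinuousOn g I)
    (ha : a ∈ I) {b : ℝ} (hb : b ∈ interior I) :
    HasDerivAt (fun t => ∫ r in a..t, g r) (g b) b :=
  intervalIntegral.integral_hasDerivAt_right
    (hg.mono (hI.uIcc_subset ha (interior_subset hb))).intervalIntegrable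
    ((hg.mono interior_subset).stronglyMeasurableAtFilter isOpen_interior b hb)
    (hg.continuousAt (mem_interior_iff_mem_nhds.1 hb))

end Integral

section NormedSpace

variable {E : Type*} [NormedAddCommGroup E] [NormedSpace ℝ E] {x x₀ : E}

theorem exists_mem_norm_sub_lt_of_mem_nhds (hx : x ≠ x₀) {s : Set E} (hs : s ∈ 𝓝 x) :
    ∃ y ∈ s, ‖y - x₀‖ < ‖x - x₀‖ := by
  have hcl : x ∈ closure (Metric.ball x₀ ‖x - x₀‖) := by
    rw [closure_ball x₀ (norm_sub_pos_iff.2 hx).ne']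
    exact Metric.mem_closedBall.2 (dist_eq_norm x x₀).le
  obtain ⟨y, hys, hy⟩ := mem_closure_iff_nhds.1 hcl s hs
  exact ⟨y, hys, by rwa [Metric.mem_ball, dist_eq_norm] at hy⟩

theorem exists_mem_norm_sub_gt_of_mem_nhds (hx : x ≠ x₀) {s : Set E} (hs : s ∈ 𝓝 x) :
    ∃ y ∈ s, ‖x - x₀‖ < ‖y - x₀‖ := by
  have hcl : x ∈ closure (Metric.closedBall x₀ ‖x - x₀‖)ᶜ := by
    rw [closure_compl, interior_closedBall x₀ (norm_sub_pos_iff.2 hx).ne']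
    exact fun hball => (Metric.mem_ball.1 hball).ne (dist_eq_norm x x₀)
  obtain ⟨y, hys, hy⟩ := mem_closure_iff_nhds.1 hcl s hs
  exact ⟨y, hys, by rwa [mem_compl_iff, Metric.mem_closedBall, dist_eq_norm, not_le] at hy⟩

theorem mem_interior_of_strictMonoOn_comp_eq_norm_sub {I : Set ℝ} (hI : I.OrdConnected)
    {F : ℝ → ℝ} (hF : StrictMonoOn F I) {Ω : Set E} (hΩ : IsOpen Ω) {h : E → ℝ}
    (hmem : ∀ y ∈ Ω, h y ∈ I) (hcomp : ∀ y ∈ Ω, F (h y) = ‖y - x₀‖) (hx : x ∈ Ω)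
    (hx₀ : x ≠ x₀) : h x ∈ interior I := by
  obtain ⟨y₁, hy₁, hlt⟩ := exists_mem_norm_sub_lt_of_mem_nhds hx₀ (hΩ.mem_nhds hx)
  obtain ⟨y₂, hy₂, hgt⟩ := exists_mem_norm_sub_gt_of_mem_nhds hx₀ (hΩ.mem_nhds hx)
  have h₁ : h y₁ < h x := by
    rw [← hF.lt_iff_lt (hmem y₁ hy₁) (hmem x hx), hcomp y₁ hy₁, hcomp x hx]
    exact hlt
  have h₂ : h x < h y₂ := by
    rw [← hF.lt_iff_lt (hmem x hx) (hmem y₂ hy₂), hcomp y₂ hy₂, hcomp x hx]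
    exact hgt
  refine interior_mono (hI.out (hmem y₁ hy₁) (hmem y₂ hy₂)) ?_
  rw [interior_Icc]
  exact ⟨h₁, h₂⟩

end NormedSpace

section InnerProductSpace

variable {E : Type*} [NormedAddCommGroup E] [InnerProductSpace ℝ E] [CompleteSpace E] {x x₀ : E}

theorem hasGradientAt_norm_sub (hx : x ≠ x₀) :
    HasGradientAt (fun y => ‖y - x₀‖) (‖x - x₀‖⁻¹ • (x - x₀)) x := by
  have hr : ‖x - x₀‖ ≠ 0 := (norm_sub_pos_iff.2 hx).ne'
  have hsub : HasFDerivAt (fun y : E => y - x₀) (ContinuousLinearMap.id ℝ E) x :=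
    (hasFDerivAt_id x).sub_const x₀
  have hsq := hsub.norm_sq.sqrt (by simpa using hr)
  simp only [Real.sqrt_sq (norm_nonneg _)] at hsq
  refine hsq.congr_fderiv ?_
  ext v
  simp only [toDual_apply_apply, real_inner_smul_left, smul_apply, ContinuousLinearMap.comp_id,
    coe_innerSL_apply, smul_eq_mul, nsmul_eq_mul, Nat.cast_ofNat]
  field_simp

theorem HasGradientAt.of_hasDerivAt_comp {h φ : E → ℝ} {F : ℝ → ℝ} {F' : ℝ} {g : E}
    (hF : HasDerivAt F F' (h x)) (hF' : F' ≠ 0) (hh : DifferentiableAt ℝ h x)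
    (hφ : HasGradientAt φ g x) (hcomp : (fun y => F (h y)) =ᶠ[𝓝 x] φ) :
    HasGradientAt h (F'⁻¹ • g) x := by
  have hunique : F' • fderiv ℝ h x = toDual ℝ E g :=
    (hF.comp_hasFDerivAt x hh.hasFDerivAt).unique (hφ.hasFDerivAt.congr_of_eventuallyEq hcomp)
  rw [hasGradientAt_iff_hasFDerivAt, map_smul, ← hunique, smul_smul, inv_mul_cancel₀ hF',
    one_smul]
  exact hh.hasFDerivAt

theorem fderiv_apply_of_eventuallyEq_comp_smul_sub {G : E → E} {k : ℝ → ℝ} {h : E → ℝ} {c : ℝ}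
    (hk : DifferentiableAt ℝ k (h x)) (hh : HasGradientAt h (c • (x - x₀)) x)
    (hG : G =ᶠ[𝓝 x] fun y => k (h y) • (y - x₀)) {v : E} (hv : inner ℝ v (x - x₀) = 0) :
    fderiv ℝ G x v = k (h x) • v := by
  have hsub : HasFDerivAt (fun y : E => y - x₀) (ContinuousLinearMap.id ℝ E) x :=
    (hasFDerivAt_id x).sub_const x₀
  have hψ : HasFDerivAt (fun y => k (h y)) _ x := hk.hasDerivAt.comp_hasFDerivAt x hh.hasFDerivAt
  rw [hG.fderiv_eq, (hψ.fun_smul hsub).fderiv]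
  have hv' : inner ℝ (x - x₀) v = 0 := by rwa [real_inner_comm]
  simp only [add_apply, smul_apply,
    ContinuousLinearMap.id_apply, ContinuousLinearMap.smulRight_apply, toDual_apply_apply,
    real_inner_smul_left, hv', mul_zero, smul_eq_mul, zero_smul, add_zero]

end InnerProductSpace

noncomputable def conformalTime (f : ℝ → ℝ) (t₀ t : ℝ) : ℝ := ∫ r in t₀..t, 1 / f r

theorem lightcone_graph_gradient_and_umbilic_general
    {E : Type*} [NormedAddCommGroup E] [InnerProductSpace ℝ E] [CompleteSpace E]
    (x₀ : E) (I : Set ℝ) (hI : I.OrdConnected)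
    (f : ℝ → ℝ) (hf : ContDiffOn ℝ 1 f I) (hfpos : ∀ t ∈ I, 0 < f t)
    (tstar : ℝ) (htstar : tstar ∈ I)
    (Ω : Set E) (hΩ : IsOpen Ω) (hΩsub : ∀ x ∈ Ω, x ≠ x₀)
    (h : E → ℝ) (hdiff : DifferentiableOn ℝ h Ω)
    (hmem : ∀ x ∈ Ω, h x ∈ I)
    (hcone : ∀ x ∈ Ω, (∫ r in tstar..(h x), 1 / f r) = ‖x - x₀‖) :
    ∀ x ∈ Ω,
      gradient h x = (f (h x) / ‖x - x₀‖) • (x - x₀) ∧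
      ∀ v : E, (inner ℝ v (x - x₀) : ℝ) = 0 →
        fderiv ℝ (gradient h) x v = (f (h x) / ‖x - x₀‖) • v := by
  have hτ : ∀ y ∈ Ω, conformalTime f tstar (h y) = ‖y - x₀‖ := hcone
  have hinv : ContinuousOn (fun t => 1 / f t) I :=
    continuousOn_const.div hf.continuousOn fun t ht => (hfpos t ht).ne'
  have hmono : StrictMonoOn (conformalTime f tstar) I :=
    strictMonoOn_integral_of_pos hI hinv (fun t ht => one_div_pos.2 (hfpos t ht)) htstar
  have hint : ∀ y ∈ Ω, h y ∈ interior I := fun y hy =>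
    mem_interior_of_strictMonoOn_comp_eq_norm_sub hI hmono hΩ hmem hτ hy (hΩsub y hy)
  have hderiv : ∀ y ∈ Ω, HasDerivAt (conformalTime f tstar) (1 / f (h y)) (h y) := fun y hy =>
    hasDerivAt_integral_of_continuousOn hI hinv htstar (hint y hy)
  have hgrad : ∀ y ∈ Ω, HasGradientAt h ((f (h y) / ‖y - x₀‖) • (y - x₀)) y := by
    intro y hy
    have hcomp : (fun z => conformalTime f tstar (h z)) =ᶠ[𝓝 y] fun z => ‖z - x₀‖ :=
      eventually_of_mem (hΩ.mem_nhds hy) hτ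
    have hgrad_y := (hasGradientAt_norm_sub (hΩsub y hy)).of_hasDerivAt_comp (hderiv y hy)
      (one_div_ne_zero (hfpos _ (hmem y hy)).ne') (hdiff.differentiableAt (hΩ.mem_nhds hy)) hcomp
    rwa [smul_smul, one_div, inv_inv, ← div_eq_mul_inv] at hgrad_y
  intro x hx
  refine ⟨(hgrad x hx).gradient, fun v hv => ?_⟩
  have hk : DifferentiableAt ℝ (fun t => f t / conformalTime f tstar t) (h x) :=
    ((hf.contDiffAt (mem_interior_iff_mem_nhds.1 (hint x hx))).differentiableAt one_ne_zero).div
      (hderiv x hx).differentiableAt (by rw [hτ x hx]; exact (norm_sub_pos_iff.2 (hΩsub x hx)).ne')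
  have hG : gradient h =ᶠ[𝓝 x] fun y => (f (h y) / conformalTime f tstar (h y)) • (y - x₀) := by
    filter_upwards [hΩ.mem_nhds hx] with y hy
    rw [(hgrad y hy).gradient, hτ y hy]
  rw [fderiv_apply_of_eventuallyEq_comp_smul_sub hk (hgrad x hx) hG hv, hτ x hx]

/-- Propositions `conoGRW` and `conosumbilicos` of the paper for a flat Hilbert
fibre: if the graph of `h` is the lightcone hypersurface, i.e.
`∫_{t*}^{h(x)} dr/f(r) = ‖x − x₀‖`, then `∇h(x) = (f(h(x))/‖x−x₀‖)(x−x₀)`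
(so the graph is lightlike), and the derivative of `∇h` in screen directions
is `(f(h(x))/‖x−x₀‖)·id`, i.e. the lightcone is totally umbilic. -/
theorem lightcone_graph_gradient_and_umbilic
    {E : Type*} [NormedAddCommGroup E] [InnerProductSpace ℝ E] [CompleteSpace E]
    (hdim : 2 ≤ Module.rank ℝ E)
    (x₀ : E) (I : Set ℝ) (hI : I.OrdConnected)
    (f : ℝ → ℝ) (hf : ContDiffOn ℝ 1 f I) (hfpos : ∀ t ∈ I, 0 < f t)
    (tstar : ℝ) (htstar : tstar ∈ I)
    (Ω : Set E) (hΩ : IsOpen Ω) (hΩsub : ∀ x ∈ Ω, x ≠ x₀)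
    (h : E → ℝ) (hdiff : DifferentiableOn ℝ h Ω)
    (hmem : ∀ x ∈ Ω, h x ∈ I)
    (hcone : ∀ x ∈ Ω, (∫ r in tstar..(h x), 1 / f r) = ‖x - x₀‖) :
    ∀ x ∈ Ω,
      gradient h x = (f (h x) / ‖x - x₀‖) • (x - x₀) ∧
      ∀ v : E, (inner ℝ v (x - x₀) : ℝ) = 0 →
        fderiv ℝ (gradient h) x v = (f (h x) / ‖x - x₀‖) • v :=
  lightcone_graph_gradient_and_umbilic_general x₀ I hI f hf hfpos tstar htstar Ω hΩ hΩsub h hdiff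
    hmem hcone
end

section
/- Let c > 0 and let h : ℝ → ℝ be differentiable on all of ℝ with h′(t) ≥ c·h(t)² for every t ∈ ℝ. Then h is identically zero. (Paper: the Riccati comparison step in the proof of Theorem 'teoLcerrada': from 0 ≤ ξ(H) − H²/(n−2) along complete integral curves of the lightlike geodesic vector field ξ one concludes that the lightlike mean curvature H vanishes, hence L is totally geodesic.) -/
/-!
Along an interval where `h > 0`, the inequality `h' ≥ c h²` says `(1/h)' ≤ -c`, so `1/h` would
become negative within time `1/(c h(t₀))` of any point `t₀` with `h(t₀) > 0`: a positive value
blows up in finite forward time, which is impossible for a solution defined on all of `ℝ`.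
Hence `h ≤ 0`. The reflection `t ↦ -h(-t)` satisfies the same inequality, so also `h ≥ 0`.
-/

open Set

section Riccati

variable {c : ℝ} {h : ℝ → ℝ}

theorem mul_sub_le_inv_sub_inv_of_sq_le_deriv {a b : ℝ} (hab : a ≤ b)
    (hdiff : ∀ x ∈ Icc a b, DifferentiableAt ℝ h x) (hpos : ∀ x ∈ Icc a b, 0 < h x)
    (hineq : ∀ x ∈ Ioo a b, c * h x ^ 2 ≤ deriv h x) :
    c * (b - a) ≤ (h a)⁻¹ - (h b)⁻¹ := by
  have hinv_cont : ContinuousOn (fun x => (h x)⁻¹) (Icc a b) := fun x hx =>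
    ((hdiff x hx).continuousAt.inv₀ (hpos x hx).ne').continuousWithinAt
  have hinv_diff : DifferentiableOn ℝ (fun x => (h x)⁻¹) (interior (Icc a b)) := fun x hx =>
    have hx : x ∈ Icc a b := interior_subset hx
    ((hdiff x hx).inv (hpos x hx).ne').differentiableWithinAt
  have hinv_deriv : ∀ x ∈ interior (Icc a b), deriv (fun x => (h x)⁻¹) x ≤ -c := by
    rw [interior_Icc]
    intro x hx
    have hx_pos := hpos x (Ioo_subset_Icc_self hx)
    rw [deriv_fun_inv'' (hdiff x (Ioo_subset_Icc_self hx)) hx_pos.ne', neg_div, neg_le_neg_iff,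
      le_div_iff₀ (by positivity)]
    exact hineq x hx
  have := (convex_Icc a b).image_sub_le_mul_sub_of_deriv_le hinv_cont hinv_diff hinv_deriv
    a (left_mem_Icc.2 hab) b (right_mem_Icc.2 hab) hab
  linarith

theorem nonpos_of_sq_le_deriv (hc : 0 < c) (hdiff : Differentiable ℝ h)
    (hineq : ∀ t, c * h t ^ 2 ≤ deriv h t) (t₀ : ℝ) : h t₀ ≤ 0 := by
  by_contra! ht₀
  have hmono : Monotone h :=
    monotone_of_deriv_nonneg hdiff fun t => (by positivity : 0 ≤ c * h t ^ 2).trans (hineq t)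
  -- `1 / h` decreases at rate at least `c`, so it would reach `0` by time `T`.
  set T := t₀ + (c * h t₀)⁻¹
  have hT : t₀ ≤ T := le_add_of_nonneg_right (by positivity)
  have hpos : ∀ x ∈ Icc t₀ T, 0 < h x := fun x hx => ht₀.trans_le (hmono hx.1)
  have hbound := mul_sub_le_inv_sub_inv_of_sq_le_deriv hT (fun x _ => hdiff x) hpos
    fun x _ => hineq x
  have hcT : c * (T - t₀) = (h t₀)⁻¹ := by
    simp only [T, add_sub_cancel_left, mul_inv, ← mul_assoc, mul_inv_cancel₀ hc.ne', one_mul]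
  have : 0 < (h T)⁻¹ := inv_pos.2 (hpos T (right_mem_Icc.2 hT))
  linarith

theorem sq_le_deriv_neg_comp_neg (hineq : ∀ t, c * h t ^ 2 ≤ deriv h t) (t : ℝ) :
    c * (-h (-t)) ^ 2 ≤ deriv (fun s => -h (-s)) t := by
  simpa only [deriv.fun_neg, deriv_comp_neg, neg_neg, neg_sq] using hineq (-t)

end Riccati

/-- The Riccati comparison step in the proof of Theorem `teoLcerrada` of the
paper: a function `h : ℝ → ℝ`, differentiable on all of `ℝ` and satisfying
`h′(t) ≥ c·h(t)²` everywhere for some `c > 0`, must vanish identically. -/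
theorem riccati_global_implies_zero
    (c : ℝ) (hc : 0 < c)
    (h : ℝ → ℝ) (hdiff : Differentiable ℝ h)
    (hineq : ∀ t : ℝ, c * (h t) ^ 2 ≤ deriv h t) :
    ∀ t : ℝ, h t = 0 := by
  intro t
  have hreflect : -h (-(-t)) ≤ 0 :=
    nonpos_of_sq_le_deriv hc (hdiff.comp differentiable_neg).neg
      (sq_le_deriv_neg_comp_neg hineq) (-t)
  rw [neg_neg] at hreflect
  exact le_antisymm (nonpos_of_sq_le_deriv hc hdiff hineq t) (neg_nonpos.1 hreflect)
end

section
/- Let F be a real inner product space and on V = F × ℝ × ℝ × ℝ define the symmetric bilinear form q((z,a,b,c),(z′,a′,b′,c′)) = ⟨z,z′⟩ + a·a′ − b·b′ − c·c′ (the metric of ℝ₂^{n+1}). For s ∈ ℝ and z ∈ F set p(s,z) = ((e^s/cosh s)·z, tanh s − e^s‖z‖²/(2 cosh s), 1 + e^s‖z‖²/(2 cosh s), tanh s) and q₀ = (0, −1, 1, −1). Then q(p(s,z), p(s,z)) = −1 and q(p(s,z) − q₀, p(s,z) − q₀) = 0 for all s and z. (Paper: the third case in the proof of Theorem 'Teor1':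 the totally umbilic lightlike hypersurface of ℍⁿ₁ corresponding to the decomposition ℝ ×_{e^s} ℝ^{n−2} of the fibre lies on the quadric ℍⁿ₁ = {x : q(x,x) = −1} and is contained in the lightcone of the point q₀ = (0,…,0,−1,1,−1).) -/
/-!
Put `λ = eˢ / cosh s`, so that `tanh s = λ - 1`. Then `p(s,z) = q₀ + λ · n(z)` with
`n(z) = (z, 1 - ‖z‖²/2, ‖z‖²/2, 1)`, and `n(z)` is a null vector `q`-orthogonal to `q₀`,
while `q(q₀,q₀) = -1`. Expanding `q` along the line `q₀ + λ n` gives both claims.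
-/

open Real

namespace AdS

variable {F : Type*} [NormedAddCommGroup F] [InnerProductSpace ℝ F]

def form (x y : F × ℝ × ℝ × ℝ) : ℝ :=
  inner ℝ x.1 y.1 + x.2.1 * y.2.1 - x.2.2.1 * y.2.2.1 - x.2.2.2 * y.2.2.2

theorem form_comm (x y : F × ℝ × ℝ × ℝ) : form x y = form y x := by
  simp only [form, real_inner_comm x.1]
  ring

theorem form_smul_smul (t : ℝ) (x : F × ℝ × ℝ × ℝ) :
    form (t • x) (t • x) = t ^ 2 * form x x := by
  simp only [form, Prod.smul_fst, Prod.smul_snd, smul_eq_mul, real_inner_smul_left,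
    real_inner_smul_right]
  ring

theorem form_add_smul_self (x n : F × ℝ × ℝ × ℝ) (t : ℝ) :
    form (x + t • n) (x + t • n) = form x x + 2 * t * form x n + t ^ 2 * form n n := by
  have hsymm := form_comm n x
  simp only [form, Prod.fst_add, Prod.snd_add, Prod.smul_fst, Prod.smul_snd, smul_eq_mul,
    inner_add_left, inner_add_right, real_inner_smul_left, real_inner_smul_right] at hsymm ⊢
  linear_combination t * hsymm

def apex : F × ℝ × ℝ × ℝ := (0, -1, 1, -1)

noncomputable def nullDir (z : F) : F × ℝ × ℝ × ℝ := (z, 1 - ‖z‖ ^ 2 / 2, ‖z‖ ^ 2 / 2, 1)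

theorem form_apex_self : form (apex : F × ℝ × ℝ × ℝ) apex = -1 := by
  simp only [form, apex, inner_zero_left]
  norm_num

theorem form_apex_nullDir (z : F) : form apex (nullDir z) = 0 := by
  simp only [form, apex, nullDir, inner_zero_left]
  ring

theorem form_nullDir_self (z : F) : form (nullDir z) (nullDir z) = 0 := by
  simp only [form, nullDir, real_inner_self_eq_norm_sq]
  ring

theorem form_apex_add_smul_nullDir_self (t : ℝ) (z : F) :
    form (apex + t • nullDir z) (apex + t • nullDir z) = -1 := by
  rw [form_add_smul_self, form_apex_self, form_apex_nullDir, form_nullDir_self]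
  ring

theorem tanh_eq_exp_div_cosh_sub_one (s : ℝ) : tanh s = exp s / cosh s - 1 := by
  rw [tanh_eq_sinh_div_cosh, ← cosh_add_sinh, add_div, div_self (cosh_pos s).ne']
  ring

theorem apex_add_smul_nullDir (s : ℝ) (z : F) :
    apex + (exp s / cosh s) • nullDir z = ((exp s / cosh s) • z,
      tanh s - exp s * ‖z‖ ^ 2 / (2 * cosh s),
      1 + exp s * ‖z‖ ^ 2 / (2 * cosh s),
      tanh s) := by
  simp only [apex, nullDir, tanh_eq_exp_div_cosh_sub_one, Prod.smul_mk, smul_eq_mul,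
    Prod.mk_add_mk, zero_add, Prod.mk.injEq, true_and]
  refine ⟨?_, ?_, ?_⟩ <;> ring

end AdS

open AdS in
/-- The third case in the proof of Theorem `Teor1` of the paper: with the index-2
form `q((z,a,b,c),(z',a',b',c')) = ⟨z,z'⟩ + aa' − bb' − cc'` on `F × ℝ × ℝ × ℝ`,
the points `p(s,z)` of the totally umbilic lightlike hypersurface coming from the
decomposition `ℝ ×_{e^s} ℝ^{n-2}` of the fibre lie on anti-de Sitter space
(`q(p,p) = −1`) and on the lightcone of `q₀ = (0,−1,1,−1)`
(`q(p − q₀, p − q₀) = 0`). -/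
theorem adS_umbilic_hypersurface_in_lightcone_flat_case
    {F : Type*} [NormedAddCommGroup F] [InnerProductSpace ℝ F]
    (q : (F × ℝ × ℝ × ℝ) → (F × ℝ × ℝ × ℝ) → ℝ)
    (hq : ∀ x y : F × ℝ × ℝ × ℝ,
      q x y = (inner ℝ x.1 y.1 : ℝ) + x.2.1 * y.2.1 - x.2.2.1 * y.2.2.1
        - x.2.2.2 * y.2.2.2)
    (p : ℝ → F → F × ℝ × ℝ × ℝ)
    (hp : ∀ s z, p s z = ((exp s / cosh s) • z,
      tanh s - exp s * ‖z‖ ^ 2 / (2 * cosh s),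
      1 + exp s * ‖z‖ ^ 2 / (2 * cosh s),
      tanh s))
    (q₀ : F × ℝ × ℝ × ℝ) (hq₀ : q₀ = (0, -1, 1, -1)) :
    ∀ (s : ℝ) (z : F),
      q (p s z) (p s z) = -1 ∧ q (p s z - q₀) (p s z - q₀) = 0 := by
  intro s z
  have hq_form : q = form := funext₂ hq
  have hq₀_apex : q₀ = apex := hq₀
  rw [hq_form, hq₀_apex, hp, ← apex_add_smul_nullDir, add_sub_cancel_left,
    form_smul_smul, form_nullDir_self, mul_zero]
  exact ⟨form_apex_add_smul_nullDir_self _ z, rfl⟩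
end

section
/- Let n ≥ 3 and on V = ℝ × (ℝ × ℝ^{n−2}) × ℝ define the symmetric bilinear form q((a,z,c),(a′,z′,c′)) = a·a′ + m₁(z,z′) − c·c′, where m₁((u₀,u),(v₀,v)) = −u₀·v₀ + ⟨u,v⟩ is the Minkowski form on ℝ × ℝ^{n−2} (so q has index 2, the metric of ℝ₂^{n+1}). Fix θ ≠ 0 and let z ∈ ℝ × ℝ^{n−2} satisfy m₁(z,z) = −cosh²θ. For s ∈ ℝ set p(s,z) = (sinh θ + cosh θ · tanh s, (1 + tanh θ · tanh s)·z, tanh s) and c₀ = (−1/sinh θ, 0, −1/tanh θ). Then q(p(s,z), p(s,z)) = −1 and q(p(s,z) − c₀, p(s,z) − c₀) = 0. (Paper: the second case in the proof of Theorem 'Teor1': the totally umbilic lightlike hypersurface of ℍⁿ₁ corresponding to the decomposition ℝ ×_{cosh(s+θ)/cosh θ} ℍ^{n−2}(cosh θ) of the fibre lies on the quadric ℍⁿ₁ and is contained in the lightcone of the point (−1/sinh θ, 0, …, 0, −1/tanh θ).) -/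
open Real

/-! The point `p(s)` and the vertex `c₀` both lie on `q = -1`, and in addition
`q(p(s), c₀) = -1`. Polarization then gives `q(p − c₀, p − c₀) = -1 - 2·(-1) + (-1) = 0`.
All three values follow from `cosh² θ − sinh² θ = 1` alone, for any real `t` in place
of `tanh s`. -/

noncomputable section

variable {E : Type*} [NormedAddCommGroup E] [InnerProductSpace ℝ E]

def minkowskiForm (x y : ℝ × E) : ℝ := -(x.1 * y.1) + inner ℝ x.2 y.2

def adsForm (x y : ℝ × (ℝ × E) × ℝ) : ℝ :=
  x.1 * y.1 + minkowskiForm x.2.1 y.2.1 - x.2.2 * y.2.2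

theorem minkowskiForm_smul_smul (a b : ℝ) (x y : ℝ × E) :
    minkowskiForm (a • x) (b • y) = a * b * minkowskiForm x y := by
  simp only [minkowskiForm, Prod.smul_fst, Prod.smul_snd, smul_eq_mul, real_inner_smul_left,
    real_inner_smul_right]
  ring

theorem minkowskiForm_zero_right (x : ℝ × E) : minkowskiForm x 0 = 0 := by
  simp [minkowskiForm]

theorem minkowskiForm_sub_sub (x y : ℝ × E) :
    minkowskiForm (x - y) (x - y) =
      minkowskiForm x x - 2 * minkowskiForm x y + minkowskiForm y y := by
  simp only [minkowskiForm, Prod.fst_sub, Prod.snd_sub, inner_sub_left, inner_sub_right,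
    real_inner_comm x.2 y.2]
  ring

theorem adsForm_sub_sub (x y : ℝ × (ℝ × E) × ℝ) :
    adsForm (x - y) (x - y) = adsForm x x - 2 * adsForm x y + adsForm y y := by
  simp only [adsForm, Prod.fst_sub, Prod.snd_sub, minkowskiForm_sub_sub]
  ring

theorem adsForm_sub_self_eq_zero_of_eq_neg_one {x y : ℝ × (ℝ × E) × ℝ}
    (hx : adsForm x x = -1) (hy : adsForm y y = -1) (hxy : adsForm x y = -1) :
    adsForm (x - y) (x - y) = 0 := by
  rw [adsForm_sub_sub, hx, hy, hxy]
  ring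

def umbilicPoint (θ t : ℝ) (z : ℝ × E) : ℝ × (ℝ × E) × ℝ :=
  (sinh θ + cosh θ * t, (1 + tanh θ * t) • z, t)

variable (E) in
def lightconeVertex (θ : ℝ) : ℝ × (ℝ × E) × ℝ :=
  (-1 / sinh θ, 0, -1 / tanh θ)

theorem adsForm_umbilicPoint_self {θ : ℝ} {z : ℝ × E} (hz : minkowskiForm z z = -cosh θ ^ 2)
    (t : ℝ) : adsForm (umbilicPoint θ t z) (umbilicPoint θ t z) = -1 := by
  have hcosh : cosh θ ≠ 0 := (cosh_pos θ).ne'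
  simp only [adsForm, umbilicPoint, minkowskiForm_smul_smul, hz, tanh_eq_sinh_div_cosh]
  field_simp
  linear_combination (t ^ 2 - 1) * cosh_sq_sub_sinh_sq θ

theorem adsForm_lightconeVertex_self {θ : ℝ} (hθ : θ ≠ 0) :
    adsForm (lightconeVertex E θ) (lightconeVertex E θ) = -1 := by
  have hsinh : sinh θ ≠ 0 := sinh_ne_zero.mpr hθ
  have hcosh : cosh θ ≠ 0 := (cosh_pos θ).ne'
  simp only [adsForm, lightconeVertex, minkowskiForm_zero_right, tanh_eq_sinh_div_cosh]
  field_simp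
  linear_combination -cosh_sq_sub_sinh_sq θ

theorem adsForm_umbilicPoint_lightconeVertex {θ : ℝ} (hθ : θ ≠ 0) (t : ℝ) (z : ℝ × E) :
    adsForm (umbilicPoint θ t z) (lightconeVertex E θ) = -1 := by
  have hsinh : sinh θ ≠ 0 := sinh_ne_zero.mpr hθ
  have hcosh : cosh θ ≠ 0 := (cosh_pos θ).ne'
  simp only [adsForm, umbilicPoint, lightconeVertex, minkowskiForm_zero_right,
    tanh_eq_sinh_div_cosh]
  field_simp
  ring

end

theorem adS_umbilic_hypersurface_in_lightcone_hyperbolic_case_general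
    (n : ℕ)
    (m₁ : (ℝ × EuclideanSpace ℝ (Fin (n - 2))) →
          (ℝ × EuclideanSpace ℝ (Fin (n - 2))) → ℝ)
    (hm₁ : ∀ x y, m₁ x y = -(x.1 * y.1) + (inner ℝ x.2 y.2 : ℝ))
    (q : (ℝ × (ℝ × EuclideanSpace ℝ (Fin (n - 2))) × ℝ) →
         (ℝ × (ℝ × EuclideanSpace ℝ (Fin (n - 2))) × ℝ) → ℝ)
    (hq : ∀ x y, q x y = x.1 * y.1 + m₁ x.2.1 y.2.1 - x.2.2 * y.2.2)
    (θ : ℝ) (hθ : θ ≠ 0)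
    (z : ℝ × EuclideanSpace ℝ (Fin (n - 2))) (hz : m₁ z z = -(cosh θ) ^ 2)
    (p : ℝ → ℝ × (ℝ × EuclideanSpace ℝ (Fin (n - 2))) × ℝ)
    (hp : ∀ s, p s = (sinh θ + cosh θ * tanh s,
      (1 + tanh θ * tanh s) • z, tanh s))
    (c₀ : ℝ × (ℝ × EuclideanSpace ℝ (Fin (n - 2))) × ℝ)
    (hc₀ : c₀ = (-1 / sinh θ, 0, -1 / tanh θ)) :
    ∀ s : ℝ, q (p s) (p s) = -1 ∧ q (p s - c₀) (p s - c₀) = 0 := by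
  intro s
  have hm : m₁ = minkowskiForm := funext fun x => funext (hm₁ x)
  have hq' : q = adsForm := by
    funext x y
    rw [hq, hm, adsForm]
  have hps : p s = umbilicPoint θ (tanh s) z := hp s
  have hc₀' : c₀ = lightconeVertex _ θ := hc₀
  rw [hm] at hz
  rw [hq', hps, hc₀']
  exact ⟨adsForm_umbilicPoint_self hz _,
    adsForm_sub_self_eq_zero_of_eq_neg_one (adsForm_umbilicPoint_self hz _)
      (adsForm_lightconeVertex_self hθ) (adsForm_umbilicPoint_lightconeVertex hθ _ _)⟩

/-- The second case in the proof of Theorem `Teor1` of the paper: on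
`V = ℝ × (ℝ × ℝ^{n-2}) × ℝ` with the index-2 form
`q((a,z,c),(a',z',c')) = aa' + m₁(z,z') − cc'`, where `m₁` is the Minkowski form
of the middle factor, the points `p(s)` of the totally umbilic lightlike
hypersurface coming from the decomposition `ℝ ×_{cosh(s+θ)/cosh θ} ℍ^{n-2}(cosh θ)`
of the fibre (with `z` on the hyperbolic space `m₁(z,z) = −cosh²θ`) lie on
anti-de Sitter space (`q(p,p) = −1`) and on the lightcone of
`c₀ = (−1/sinh θ, 0, −1/tanh θ)` (`q(p − c₀, p − c₀) = 0`). -/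
theorem adS_umbilic_hypersurface_in_lightcone_hyperbolic_case
    (n : ℕ) (hn : 3 ≤ n)
    (m₁ : (ℝ × EuclideanSpace ℝ (Fin (n - 2))) →
          (ℝ × EuclideanSpace ℝ (Fin (n - 2))) → ℝ)
    (hm₁ : ∀ x y, m₁ x y = -(x.1 * y.1) + (inner ℝ x.2 y.2 : ℝ))
    (q : (ℝ × (ℝ × EuclideanSpace ℝ (Fin (n - 2))) × ℝ) →
         (ℝ × (ℝ × EuclideanSpace ℝ (Fin (n - 2))) × ℝ) → ℝ)
    (hq : ∀ x y, q x y = x.1 * y.1 + m₁ x.2.1 y.2.1 - x.2.2 * y.2.2)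
    (θ : ℝ) (hθ : θ ≠ 0)
    (z : ℝ × EuclideanSpace ℝ (Fin (n - 2))) (hz : m₁ z z = -(cosh θ) ^ 2)
    (p : ℝ → ℝ × (ℝ × EuclideanSpace ℝ (Fin (n - 2))) × ℝ)
    (hp : ∀ s, p s = (sinh θ + cosh θ * tanh s,
      (1 + tanh θ * tanh s) • z, tanh s))
    (c₀ : ℝ × (ℝ × EuclideanSpace ℝ (Fin (n - 2))) × ℝ)
    (hc₀ : c₀ = (-1 / sinh θ, 0, -1 / tanh θ)) :
    ∀ s : ℝ, q (p s) (p s) = -1 ∧ q (p s - c₀) (p s - c₀) = 0 :=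
  adS_umbilic_hypersurface_in_lightcone_hyperbolic_case_general n m₁ hm₁ q hq θ hθ z hz p hp c₀ hc₀
end
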